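/- Let G be a finite simple graph, M a matching of G, and P an M-augmenting path in G. Then the symmetric difference M Δ E(P) is a matching of G with |M Δ E(P)| = |M| + 1 and V(M) ⊊ V(M Δ E(P)). -/

import Mathlib

variable {V : Type*}

/-- The set of vertices covered by a set of edges. -/
def edgeCover (M : Finset (Sym2 V)) : Set V := {v | ∃ e ∈ M, v ∈ e}

/-- `M` is a matching of `G`: a set of pairwise disjoint edges of `G`. -/
def IsMatchingSet (G : SimpleGraph V) (M : Finset (Sym2 V)) : Prop :=
  (∀ e ∈ M, e ∈ G.edgeSet) ∧
    ∀ e ∈ M, ∀ f ∈ M, e ≠ f → ∀ v : V, v ∈ e → v ∉ f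

/-- `M` is a maximum matching of `G`. -/
def IsMaximumMatchingSet (G : SimpleGraph V) (M : Finset (Sym2 V)) : Prop :=
  IsMatchingSet G M ∧ ∀ N : Finset (Sym2 V), IsMatchingSet G N → N.card ≤ M.card

variable [Fintype V] [DecidableEq V]

/-- `M` is a `k`-matching cover of `G`: a union of `k` matchings of `G` covering `V(G)`. -/
def IsKMatchingCover (G : SimpleGraph V) (k : ℕ) (M : Finset (Sym2 V)) : Prop :=
  (∃ f : Fin k → Finset (Sym2 V), (∀ i, IsMatchingSet G (f i)) ∧
      M = Finset.univ.biUnion f) ∧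
    ∀ v : V, v ∈ edgeCover M

/-- The matching cover number `mc(G)`. -/
noncomputable def mc (G : SimpleGraph V) : ℕ :=
  sInf {k | ∃ M : Finset (Sym2 V), IsKMatchingCover G k M}

/-- `M` is a `k`-matching `D`-cover of `G`: a union of `k` matchings of `G` covering `D`. -/
def IsKMatchingDCover (G : SimpleGraph V) (D : Set V) (k : ℕ)
    (M : Finset (Sym2 V)) : Prop :=
  (∃ f : Fin k → Finset (Sym2 V), (∀ i, IsMatchingSet G (f i)) ∧
      M = Finset.univ.biUnion f) ∧
    ∀ v ∈ D, v ∈ edgeCover M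

/-- The matching `D`-cover number `md(G)`. -/
noncomputable def md (G : SimpleGraph V) (D : Set V) : ℕ :=
  sInf {k | ∃ M : Finset (Sym2 V), IsKMatchingDCover G D k M}

/-- The Gallai–Edmonds set `D(G)`: vertices missed by some maximum matching. -/
def Dset (G : SimpleGraph V) : Set V :=
  {v | ∃ M : Finset (Sym2 V), IsMaximumMatchingSet G M ∧ v ∉ edgeCover M}

/-- The Gallai–Edmonds set `A(G) = N_G(D(G))`. -/
def Aset (G : SimpleGraph V) : Set V :=
  {v | v ∉ Dset G ∧ ∃ u ∈ Dset G, G.Adj u v}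

/-- The Gallai–Edmonds set `C(G) = V(G) \ (A(G) ∪ D(G))`. -/
def Cset (G : SimpleGraph V) : Set V :=
  {v | v ∉ Dset G ∧ v ∉ Aset G}

/-- The induced subgraph `G[s]`, viewed as a graph on the same vertex type. -/
def indOn (G : SimpleGraph V) (s : Set V) : SimpleGraph V where
  Adj a b := a ∈ s ∧ b ∈ s ∧ G.Adj a b
  symm := by constructor; rintro a b ⟨ha, hb, h⟩; exact ⟨hb, ha, h.symm⟩
  loopless := by constructor; rintro a ⟨-, -, h⟩; exact G.loopless.irrefl a h

/-- `D*`: the set of isolated vertices of `G[D(G)]`. -/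
def DstarSet (G : SimpleGraph V) : Set V :=
  {v | v ∈ Dset G ∧ ∀ u : V, ¬ (indOn G (Dset G)).Adj v u}

/-- The bipartite graph `G*`, obtained from `G` by deleting the nontrivial components of
`G[D(G)]`, the vertices of `C(G)`, and the edges spanned by `A(G)`: its edges are exactly
the edges of `G` joining `A(G)` and `D*`. -/
def Gstar (G : SimpleGraph V) : SimpleGraph V where
  Adj a b := G.Adj a b ∧
    ((a ∈ Aset G ∧ b ∈ DstarSet G) ∨ (a ∈ DstarSet G ∧ b ∈ Aset G))
  symm := by constructor; rintro a b ⟨h, hc⟩; exact ⟨h.symm, by tauto⟩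
  loopless := by constructor; rintro a ⟨h, -⟩; exact G.loopless.irrefl a h

open Classical in
/-- The degree of `v` in the edge set `M`; this is the degree of `v` in `G[M]+A`
(vertices not covered by `M` have degree `0`). -/
noncomputable def degM (M : Finset (Sym2 V)) (v : V) : ℕ :=
  (M.filter fun e => v ∈ e).card

/-- The maximum degree `Δ(G[M]+A)`. -/
noncomputable def maxDegPlus (M : Finset (Sym2 V)) : ℕ :=
  Finset.univ.sup fun v : V => degM M v

/-- `w` is a maximum center of `M` (all vertices of `A` being regarded as centers). -/
def IsMaximumCenter (A : Set V) (M : Finset (Sym2 V)) (w : V) : Prop :=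
  w ∈ A ∧ degM M w = maxDegPlus M

/-- `(A, D)` is a bipartition of `G`. -/
def IsBipartition (G : SimpleGraph V) (A D : Set V) : Prop :=
  Disjoint A D ∧ A ∪ D = Set.univ ∧
    ∀ a b : V, G.Adj a b → (a ∈ A ∧ b ∈ D) ∨ (a ∈ D ∧ b ∈ A)

/-- A matching `D`-cover of `G`, recorded as an edge set
(a union of matchings of `G` covering `D`). -/
def IsMDCoverSet (G : SimpleGraph V) (D : Set V) (M : Finset (Sym2 V)) : Prop :=
  ∃ k, IsKMatchingDCover G D k M

/-- A minimal matching `D`-cover: no proper subset is a matching `D`-cover. -/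
def IsMinimalMDCover (G : SimpleGraph V) (D : Set V) (M : Finset (Sym2 V)) : Prop :=
  IsMDCoverSet G D M ∧ ∀ M' ⊂ M, ¬ IsMDCoverSet G D M'

/-- The graph `G[M]` spanned by an edge set, on the same vertex type. -/
def fromEdges (M : Finset (Sym2 V)) : SimpleGraph V where
  Adj a b := a ≠ b ∧ s(a, b) ∈ M
  symm := by constructor; rintro a b ⟨hne, h⟩; exact ⟨hne.symm, by rwa [Sym2.eq_swap]⟩
  loopless := by constructor; rintro a ⟨hne, -⟩; exact hne rfl

/-- The connected component of `v` in `G[M]` is a star with center `c`: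
every vertex of the component is `c` or a neighbour of `c`, and every edge of the
component is incident with `c`. -/
def StarCenteredAt (M : Finset (Sym2 V)) (c v : V) : Prop :=
  (fromEdges M).Reachable c v ∧
    (∀ u : V, (fromEdges M).Reachable u v → u = c ∨ (fromEdges M).Adj c u) ∧
    ∀ e ∈ M, (∃ x, x ∈ e ∧ (fromEdges M).Reachable x v) → c ∈ e

/-- Every component of `G[M]` is a star whose center lies in `A`. -/
def CentersInA (A : Set V) (M : Finset (Sym2 V)) : Prop :=
  ∀ v ∈ edgeCover M, ∃ c ∈ A, StarCenteredAt M c v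

/-- `w` is an `M`-switching path: an `M`-alternating path (starting at a maximum center
with an edge of `M`, vertices alternately centers in `A` and ends, edges alternately in
`M` and outside `M`) ending at a center `v` with `d(u) ≥ d(v) + 2`. -/
def IsSwitchingPath (G : SimpleGraph V) (A : Set V) (M : Finset (Sym2 V))
    (n : ℕ) (w : Fin (n + 1) → V) : Prop :=
  0 < n ∧ Function.Injective w ∧
    (∀ i : Fin n, G.Adj (w i.castSucc) (w i.succ)) ∧
    (∀ i : Fin n, (s(w i.castSucc, w i.succ) ∈ M ↔ Even (i : ℕ))) ∧
    (∀ i : Fin (n + 1), w i ∈ A ↔ Even (i : ℕ)) ∧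
    w (Fin.last n) ∈ A ∧
    IsMaximumCenter A M (w 0) ∧
    degM M (w (Fin.last n)) + 2 ≤ degM M (w 0)

/-- There is an `M`-switching path from `u` to `v` in `G`. -/
def ExistsSwitchingPath (G : SimpleGraph V) (A : Set V) (M : Finset (Sym2 V))
    (u v : V) : Prop :=
  ∃ (n : ℕ) (w : Fin (n + 1) → V),
    IsSwitchingPath G A M n w ∧ w 0 = u ∧ w (Fin.last n) = v

/-- The edge set of the path `w 0, w 1, …, w n`. -/
def pathEdges (n : ℕ) (w : Fin (n + 1) → V) : Finset (Sym2 V) :=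
  Finset.univ.image fun i : Fin n => s(w i.castSucc, w i.succ)

theorem aux_count (n : ℕ) : ((Finset.range n).filter (fun k => Odd k)).card = n / 2 ∧
    ((Finset.range n).filter (fun k => ¬ Odd k)).card = (n+1) / 2 := by
  induction n with
  | zero => simp
  | succ n ih =>
    rw [Finset.range_add_one, Finset.filter_insert, Finset.filter_insert]
    rcases Nat.even_or_odd n with h | h
    · have hno : ¬ Odd n := by simpa [Nat.not_odd_iff_even]
      rw [if_neg hno, if_pos hno, Finset.card_insert_of_notMem (by simp)]
      obtain ⟨m, rfl⟩ := h
      omega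
    · rw [if_pos h, if_neg (by simpa using h), Finset.card_insert_of_notMem (by simp)]
      obtain ⟨m, rfl⟩ := h
      omega

/-- if `P` is an `M`-augmenting path (a path whose edges are alternately in
`M` and outside `M` and whose two ends are not covered by `M`), then `M Δ E(P)` is a
matching with one more edge, covering strictly more vertices. -/
theorem augmenting_path_symmDiff (G : SimpleGraph V) (M : Finset (Sym2 V))
    (hM : IsMatchingSet G M)
    (n : ℕ) (hn : 0 < n) (w : Fin (n + 1) → V) (hinj : Function.Injective w)
    (hadj : ∀ i : Fin n, G.Adj (w i.castSucc) (w i.succ))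
    (halt : ∀ i j : Fin n, (i : ℕ) + 1 = (j : ℕ) →
      (s(w i.castSucc, w i.succ) ∈ M ↔ s(w j.castSucc, w j.succ) ∉ M))
    (h0 : w 0 ∉ edgeCover M) (hlast : w (Fin.last n) ∉ edgeCover M) :
    IsMatchingSet G ((M \ pathEdges n w) ∪ (pathEdges n w \ M)) ∧
    ((M \ pathEdges n w) ∪ (pathEdges n w \ M)).card = M.card + 1 ∧
    edgeCover M ⊂ edgeCover ((M \ pathEdges n w) ∪ (pathEdges n w \ M)) := by
  obtain ⟨hMG, hMd⟩ := hM
  set f : Fin n → Sym2 V := fun i => s(w i.castSucc, w i.succ) with hf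
  -- injectivity of vertex indices
  have hwval : ∀ a b : Fin (n+1), w a = w b → (a : ℕ) = (b : ℕ) := by
    intro a b h
    exact congrArg Fin.val (hinj h)
  -- injectivity of f
  have hfinj : Function.Injective f := by
    intro i j hij
    simp only [hf, Sym2.eq, Sym2.rel_iff', Prod.mk.injEq, Prod.swap_prod_mk] at hij
    rcases hij with ⟨h1, _⟩ | ⟨h1, h2⟩
    · have := hwval _ _ h1; simp at this; exact Fin.ext this
    · have e1 := hwval _ _ h1; have e2 := hwval _ _ h2
      simp [Fin.val_succ] at e1 e2; omega
  have hmemP : ∀ e, e ∈ pathEdges n w ↔ ∃ i : Fin n, f i = e := by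
    intro e; simp [pathEdges, hf, Finset.mem_image, eq_comm]
  -- parity: f i ∈ M ↔ Odd i
  have hpar : ∀ k (h : k < n), (f ⟨k, h⟩ ∈ M ↔ Odd k) := by
    intro k
    induction k with
    | zero =>
      intro h
      refine iff_of_false ?_ (by decide)
      intro hmem
      exact h0 ⟨f ⟨0, h⟩, hmem, by
        have h1 : (⟨0, h⟩ : Fin n).castSucc = (0 : Fin (n+1)) := rfl
        simp [hf, h1]⟩
    | succ k ih =>
      intro h
      have hk : k < n := by omega
      have hh : f ⟨k, hk⟩ ∈ M ↔ f ⟨k+1, h⟩ ∉ M := halt ⟨k, hk⟩ ⟨k+1, h⟩ rfl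
      have ihk := ih hk
      have hoo : Odd (k+1) ↔ ¬ Odd k := by rw [Nat.odd_iff, Nat.odd_iff]; omega
      rw [hoo, ← ihk]
      tauto
  -- membership of a vertex in f i
  have hmemf : ∀ (a : Fin (n+1)) (i : Fin n), w a ∈ f i ↔ ((a : ℕ) = i ∨ (a : ℕ) = i + 1) := by
    intro a i
    simp only [hf, Sym2.mem_iff]
    constructor
    · rintro (h | h)
      · left; have := hwval _ _ h; simpa using this
      · right; have := hwval _ _ h; simpa using this
    · rintro (h | h)
      · left; congr 1; exact Fin.ext (by simpa using h)
      · right; congr 1; exact Fin.ext (by simp [Fin.val_succ]; omega)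
  -- n is odd
  have hnodd : Odd n := by
    have hn1 : n - 1 < n := by omega
    have hlastmem : w (Fin.last n) ∈ f ⟨n - 1, hn1⟩ := by
      rw [hmemf]
      right; simp [Fin.val_last]; omega
    have hnm : f ⟨n - 1, hn1⟩ ∉ M := fun hm => hlast ⟨_, hm, hlastmem⟩
    have hno : ¬ Odd (n - 1) := fun ho => hnm ((hpar _ hn1).mpr ho)
    rw [Nat.odd_iff] at hno ⊢; omega
  obtain ⟨m, hm⟩ := hnodd
  -- every M-edge containing a path vertex is a path edge
  have honlyP : ∀ e ∈ M, ∀ a : Fin (n+1), w a ∈ e → ∃ i : Fin n, f i = e ∧ Odd (i : ℕ) := by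
    intro e he a hae
    have ha0 : (a : ℕ) ≠ 0 := by
      intro h; exact h0 ⟨e, he, by rwa [show (0 : Fin (n+1)) = a from Fin.ext h.symm]⟩
    have han : (a : ℕ) ≠ n := by
      intro h; exact hlast ⟨e, he, by rwa [show Fin.last n = a from Fin.ext (by simp [h])]⟩
    -- choose the path index j with Odd j and w a ∈ f j
    have hex : ∃ j : Fin n, Odd (j : ℕ) ∧ w a ∈ f j := by
      rcases Nat.even_or_odd (a : ℕ) with hpa | hpa
      · -- a even, 1 ≤ a ≤ n-1; take j = a - 1
        have hj : (a : ℕ) - 1 < n := by omega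
        refine ⟨⟨(a : ℕ) - 1, hj⟩, ?_, ?_⟩
        · have h2 := Nat.even_iff.mp hpa
          have h1 : 1 ≤ (a : ℕ) := Nat.pos_of_ne_zero ha0
          simp only [Fin.val_mk, Nat.odd_iff]
          omega
        · rw [hmemf]; right; simp; omega
      · -- a odd; take j = a
        have hj : (a : ℕ) < n := by omega
        refine ⟨⟨(a : ℕ), hj⟩, by simpa using hpa, ?_⟩
        rw [hmemf]; left; simp
    obtain ⟨j, hjodd, haj⟩ := hex
    have hjM : f j ∈ M := (hpar j j.isLt).mpr (by simpa using hjodd)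
    refine ⟨j, ?_, hjodd⟩
    by_contra hne
    exact hMd e he (f j) hjM (fun h => hne h.symm) (w a) hae haj

  set P := pathEdges n w with hPdef
  have hparF : ∀ i : Fin n, (f i ∈ M ↔ Odd (i : ℕ)) := fun i => hpar i.val i.isLt
  have hMnotP : ∀ e ∈ M \ P, ∀ a : Fin (n+1), w a ∉ e := by
    intro e he a hae
    obtain ⟨i, hie, _⟩ := honlyP e (Finset.mem_sdiff.mp he).1 a hae
    exact (Finset.mem_sdiff.mp he).2 ((hmemP e).mpr ⟨i, hie⟩)
  have hPMeven : ∀ e ∈ P \ M, ∃ i : Fin n, f i = e ∧ ¬ Odd (i : ℕ) := by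
    intro e he
    obtain ⟨i, hie⟩ := (hmemP e).mp (Finset.mem_sdiff.mp he).1
    exact ⟨i, hie, fun ho => (Finset.mem_sdiff.mp he).2 (hie ▸ (hparF i).mpr ho)⟩
  -- every path vertex is covered by P \ M
  have hcov : ∀ a : Fin (n+1), w a ∈ edgeCover (P \ M) := by
    intro a
    rcases Nat.even_or_odd (a : ℕ) with hpa | hpa
    · have hlt : (a : ℕ) < n := by
        have h1 := a.isLt
        rw [Nat.even_iff] at hpa
        omega
      refine ⟨f ⟨a, hlt⟩, Finset.mem_sdiff.mpr ⟨(hmemP _).mpr ⟨_, rfl⟩, ?_⟩, ?_⟩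
      · intro hmem
        have := (hparF _).mp hmem
        rw [Nat.odd_iff] at this; rw [Nat.even_iff] at hpa
        simp only [Fin.val_mk] at this; omega
      · rw [hmemf]; left; simp
    · have hlt : (a : ℕ) - 1 < n := by have := a.isLt; omega
      refine ⟨f ⟨(a : ℕ) - 1, hlt⟩, Finset.mem_sdiff.mpr ⟨(hmemP _).mpr ⟨_, rfl⟩, ?_⟩, ?_⟩
      · intro hmem
        have := (hparF _).mp hmem
        rw [Nat.odd_iff] at this hpa
        simp only [Fin.val_mk] at this; omega
      · rw [hmemf]; right
        rw [Nat.odd_iff] at hpa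
        simp only [Fin.val_mk]; omega
  have hsubN : edgeCover (P \ M) ⊆ edgeCover ((M \ P) ∪ (P \ M)) := by
    rintro v ⟨e, he, hv⟩
    exact ⟨e, Finset.mem_union_right _ he, hv⟩
  refine ⟨⟨?_, ?_⟩, ?_, ?_⟩
  · -- edges of N are edges of G
    intro e he
    rcases Finset.mem_union.mp he with h | h
    · exact hMG e (Finset.mem_sdiff.mp h).1
    · obtain ⟨i, rfl⟩ := (hmemP e).mp (Finset.mem_sdiff.mp h).1
      simpa only [hf, SimpleGraph.mem_edgeSet] using hadj i
  · -- pairwise disjoint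
    intro e he g hg hne v hve hvg
    rcases Finset.mem_union.mp he with h1 | h1 <;> rcases Finset.mem_union.mp hg with h2 | h2
    · exact hMd e (Finset.mem_sdiff.mp h1).1 g (Finset.mem_sdiff.mp h2).1 hne v hve hvg
    · obtain ⟨j, rfl, hjodd⟩ := hPMeven g h2
      have : v = w j.castSucc ∨ v = w j.succ := by simpa [hf, Sym2.mem_iff] using hvg
      rcases this with rfl | rfl
      · exact hMnotP e h1 _ hve
      · exact hMnotP e h1 _ hve
    · obtain ⟨j, rfl, hjodd⟩ := hPMeven e h1
      have : v = w j.castSucc ∨ v = w j.succ := by simpa [hf, Sym2.mem_iff] using hve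
      rcases this with rfl | rfl
      · exact hMnotP g h2 _ hvg
      · exact hMnotP g h2 _ hvg
    · obtain ⟨i, rfl, hiodd⟩ := hPMeven e h1
      obtain ⟨j, rfl, hjodd⟩ := hPMeven g h2
      have hij : (i : ℕ) ≠ (j : ℕ) := by
        intro h; exact hne (congrArg f (Fin.ext h))
      have h1v : v = w i.castSucc ∨ v = w i.succ := by simpa [hf, Sym2.mem_iff] using hve
      have h2v : v = w j.castSucc ∨ v = w j.succ := by simpa [hf, Sym2.mem_iff] using hvg
      rw [Nat.odd_iff] at hiodd hjodd
      rcases h1v with rfl | rfl <;> rcases h2v with h | h <;>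
        · have := hwval _ _ h
          simp only [Fin.coe_castSucc, Fin.val_succ] at this
          omega
  · -- cardinality
    have hdisj : Disjoint (M \ P) (P \ M) := disjoint_sdiff_sdiff
    have hcardU : ((M \ P) ∪ (P \ M)).card = (M \ P).card + (P \ M).card :=
      Finset.card_union_of_disjoint hdisj
    have hMPi : M ∩ P = Finset.image f (Finset.univ.filter fun i : Fin n => Odd (i : ℕ)) := by
      ext e
      simp only [Finset.mem_inter, Finset.mem_image, Finset.mem_filter, Finset.mem_univ,
        true_and]
      constructor
      · rintro ⟨heM, heP⟩
        obtain ⟨i, rfl⟩ := (hmemP e).mp heP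
        exact ⟨i, (hparF i).mp heM, rfl⟩
      · rintro ⟨i, hodd, rfl⟩
        exact ⟨(hparF i).mpr hodd, (hmemP _).mpr ⟨i, rfl⟩⟩
    have hPMi : P \ M = Finset.image f (Finset.univ.filter fun i : Fin n => ¬ Odd (i : ℕ)) := by
      ext e
      simp only [Finset.mem_sdiff, Finset.mem_image, Finset.mem_filter, Finset.mem_univ,
        true_and]
      constructor
      · rintro ⟨heP, heM⟩
        obtain ⟨i, rfl⟩ := (hmemP e).mp heP
        exact ⟨i, fun ho => heM ((hparF i).mpr ho), rfl⟩
      · rintro ⟨i, hodd, rfl⟩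
        exact ⟨(hmemP _).mpr ⟨i, rfl⟩, fun hm => hodd ((hparF i).mp hm)⟩
    have hcnt1 : (Finset.univ.filter fun i : Fin n => Odd (i : ℕ)).card = n / 2 := by
      rw [Finset.card_filter, Fin.sum_univ_eq_sum_range (fun k => if Odd k then 1 else 0),
        ← Finset.card_filter]
      exact (aux_count n).1
    have hcnt2 : (Finset.univ.filter fun i : Fin n => ¬ Odd (i : ℕ)).card = (n + 1) / 2 := by
      rw [Finset.card_filter, Fin.sum_univ_eq_sum_range (fun k => if ¬ Odd k then 1 else 0),
        ← Finset.card_filter]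
      exact (aux_count n).2
    have hc1 : (M ∩ P).card = n / 2 := by
      rw [hMPi, Finset.card_image_of_injective _ hfinj, hcnt1]
    have hc2 : (P \ M).card = (n + 1) / 2 := by
      rw [hPMi, Finset.card_image_of_injective _ hfinj, hcnt2]
    have hc3 : (M \ P).card + (M ∩ P).card = M.card :=
      Finset.card_sdiff_add_card_inter M P
    rw [hcardU]
    omega
  · -- strict cover inclusion
    rw [Set.ssubset_def]
    constructor
    · rintro v ⟨e, he, hv⟩
      by_cases hP : e ∈ P
      · obtain ⟨i, rfl⟩ := (hmemP e).mp hP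
        have : v = w i.castSucc ∨ v = w i.succ := by simpa [hf, Sym2.mem_iff] using hv
        rcases this with rfl | rfl
        · exact hsubN (hcov _)
        · exact hsubN (hcov _)
      · exact ⟨e, Finset.mem_union_left _ (Finset.mem_sdiff.mpr ⟨he, hP⟩), hv⟩
    · intro hrev
      exact h0 (hrev (hsubN (hcov 0)))
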